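/- arXiv:1901.03218 — 7 statements merged into one kernel-verified Lean document; each statement's English description precedes it below -/
import Mathlib

section
/- If H is a graph with no isolated vertices and I is a maximal independent set of a graph G, then the set I × V(H) is a maximal independent set of the direct product G × H. -/
/-- The direct (tensor) product of two simple graphs. -/
def directProd {V W : Type*} (G : SimpleGraph V) (H : SimpleGraph W) :
    SimpleGraph (V × W) where
  Adj x y := G.Adj x.1 y.1 ∧ H.Adj x.2 y.2
  symm := ⟨fun x y h => ⟨h.1.symm, h.2.symm⟩⟩
  loopless := ⟨fun x h => G.loopless.irrefl x.1 h.1⟩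

/-- `s` is an independent set of `G`. -/
def IsIndep {V : Type*} (G : SimpleGraph V) (s : Set V) : Prop :=
  ∀ ⦃u⦄, u ∈ s → ∀ ⦃v⦄, v ∈ s → ¬ G.Adj u v

/-- `s` is a maximal independent set of `G`. -/
def IsMaxIndep {V : Type*} (G : SimpleGraph V) (s : Set V) : Prop :=
  IsIndep G s ∧ ∀ t, IsIndep G t → s ⊆ t → s = t

/-- A graph is well-covered if all maximal independent sets have the same cardinality. -/
def WellCovered {V : Type*} (G : SimpleGraph V) : Prop :=
  ∀ s t, IsMaxIndep G s → IsMaxIndep G t → s.ncard = t.ncard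

/-- The independence number of `G`. -/
noncomputable def indepNum {V : Type*} (G : SimpleGraph V) : ℕ :=
  sSup {n | ∃ s, IsIndep G s ∧ s.ncard = n}

/-- The independent domination number of `G`: the minimum size of a maximal independent set. -/
noncomputable def iNum {V : Type*} (G : SimpleGraph V) : ℕ :=
  sInf {n | ∃ s, IsMaxIndep G s ∧ s.ncard = n}

/-- The closed neighborhood `N[s]` of a set of vertices. -/
def closedNbhd {V : Type*} (G : SimpleGraph V) (s : Set V) : Set V :=
  s ∪ {v | ∃ u ∈ s, G.Adj u v}

/-- `G` has no isolated vertices. -/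
def NoIsolated {V : Type*} (G : SimpleGraph V) : Prop := ∀ v, ∃ u, G.Adj v u

/-- A vertex `v` is isolatable if some independent set `I` leaves `v` isolated in `G - N[I]`. -/
def Isolatable {V : Type*} (G : SimpleGraph V) (v : V) : Prop :=
  ∃ I : Set V, IsIndep G I ∧ v ∉ closedNbhd G I ∧ ∀ u ∉ closedNbhd G I, ¬ G.Adj v u

/-! A maximal independent set is the same as an independent dominating set. `I ×ˢ univ` is
independent because its first coordinates are, and it dominates: if `v ∉ I` then some `u ∈ I` is
adjacent to `v`, and any neighbour `w'` of `w` in `H` makes `(u, w')` adjacent to `(v, w)`. -/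

section IndependentSets

variable {V : Type*} {G : SimpleGraph V} {s : Set V}

theorem IsIndep.insert_of_forall_not_adj {v : V} (hs : IsIndep G s)
    (hv : ∀ u ∈ s, ¬ G.Adj u v) : IsIndep G (insert v s) := by
  rintro a (rfl | ha) b (rfl | hb) hab
  · exact G.loopless.irrefl _ hab
  · exact hv b hb hab.symm
  · exact hv a ha hab
  · exact hs ha hb hab

theorem IsMaxIndep.exists_adj_of_notMem {v : V} (hs : IsMaxIndep G s) (hv : v ∉ s) :
    ∃ u ∈ s, G.Adj u v := by
  by_contra! hno
  have hins := hs.2 _ (hs.1.insert_of_forall_not_adj hno) (Set.subset_insert v s)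
  exact hv (hins ▸ Set.mem_insert v s)

theorem IsIndep.isMaxIndep_of_forall_exists_adj (hs : IsIndep G s)
    (hdom : ∀ v ∉ s, ∃ u ∈ s, G.Adj u v) : IsMaxIndep G s := by
  refine ⟨hs, fun t ht hst => hst.antisymm fun v hvt => ?_⟩
  by_contra hvs
  obtain ⟨u, hus, huv⟩ := hdom v hvs
  exact ht (hst hus) hvt huv

end IndependentSets

theorem IsIndep.prod_left {V W : Type*} {G : SimpleGraph V} {s : Set V} (H : SimpleGraph W)
    (hs : IsIndep G s) (t : Set W) : IsIndep (directProd G H) (s ×ˢ t) :=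
  fun _ hu _ hv hadj => hs hu.1 hv.1 hadj.1

theorem stmt0 {V W : Type*} (G : SimpleGraph V) (H : SimpleGraph W)
    (hH : NoIsolated H) (I : Set V) (hI : IsMaxIndep G I) :
    IsMaxIndep (directProd G H) (I ×ˢ (Set.univ : Set W)) := by
  refine (hI.1.prod_left H _).isMaxIndep_of_forall_exists_adj fun ⟨v, w⟩ hvw => ?_
  have hv : v ∉ I := fun hv => hvw ⟨hv, Set.mem_univ w⟩
  obtain ⟨u, hu, huv⟩ := hI.exists_adj_of_notMem hv
  obtain ⟨w', hww'⟩ := hH w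
  exact ⟨(u, w'), ⟨hu, Set.mem_univ w'⟩, huv, hww'.symm⟩
end

section
/- If G and H are graphs with no isolated vertices, then the independent domination number i(G × H) is at most min{i(G)·n(H), i(H)·n(G)}, where i(G) is the minimum cardinality of a maximal independent set of G. -/
theorem isMaxIndep_iff {V : Type*} {G : SimpleGraph V} {s : Set V} :
    IsMaxIndep G s ↔ IsIndep G s ∧ ∀ v ∉ s, ∃ u ∈ s, G.Adj u v := by
  refine ⟨fun hs => ⟨hs.1, fun v hv => ?_⟩, fun ⟨hs, hdom⟩ => ⟨hs, fun t ht hst => ?_⟩⟩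
  · by_contra! hcon
    have hind : IsIndep G (insert v s) := by
      rintro a (rfl | ha) b (rfl | hb) hab
      · exact G.loopless.irrefl _ hab
      · exact hcon b hb hab.symm
      · exact hcon a ha hab
      · exact hs.1 ha hb hab
    exact hv (hs.2 _ hind (Set.subset_insert v s) ▸ Set.mem_insert v s)
  · refine hst.antisymm fun v hvt => ?_
    by_contra hvs
    obtain ⟨u, hus, huv⟩ := hdom v hvs
    exact ht (hst hus) hvt huv

theorem exists_isMaxIndep {V : Type*} (G : SimpleGraph V) : ∃ s, IsMaxIndep G s := by
  obtain ⟨m, hm⟩ := zorn_subset {s | IsIndep G s} fun c hc hchain => by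
    refine ⟨⋃₀ c, ?_, fun s hs => Set.subset_sUnion_of_mem hs⟩
    rintro u ⟨s, hs, hus⟩ v ⟨t, ht, hvt⟩
    rcases hchain.total hs ht with hst | hts
    · exact hc ht (hst hus) hvt
    · exact hc hs hus (hts hvt)
  exact ⟨m, hm.prop, fun t ht hmt => hm.eq_of_subset ht hmt⟩

theorem iNum_le_ncard {V : Type*} {G : SimpleGraph V} {s : Set V} (hs : IsMaxIndep G s) :
    iNum G ≤ s.ncard :=
  Nat.sInf_le ⟨s, hs, rfl⟩

theorem exists_isMaxIndep_ncard_eq_iNum {V : Type*} (G : SimpleGraph V) :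
    ∃ s, IsMaxIndep G s ∧ s.ncard = iNum G :=
  let ⟨s, hs⟩ := exists_isMaxIndep G
  Nat.sInf_mem (s := {n | ∃ s, IsMaxIndep G s ∧ s.ncard = n}) ⟨s.ncard, s, hs, rfl⟩

section directProd

variable {V W : Type*} {G : SimpleGraph V} {H : SimpleGraph W}

theorem IsMaxIndep.prod_univ (hH : NoIsolated H) {s : Set V} (hs : IsMaxIndep G s) :
    IsMaxIndep (directProd G H) (s ×ˢ Set.univ) := by
  obtain ⟨hind, hdom⟩ := isMaxIndep_iff.1 hs
  refine isMaxIndep_iff.2 ⟨fun p hp q hq hpq => hind hp.1 hq.1 hpq.1, ?_⟩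
  rintro ⟨v, w⟩ hvw
  obtain ⟨u, hus, huv⟩ := hdom v fun hv => hvw ⟨hv, trivial⟩
  obtain ⟨w', hww'⟩ := hH w
  exact ⟨(u, w'), ⟨hus, trivial⟩, huv, hww'.symm⟩

theorem IsMaxIndep.univ_prod (hG : NoIsolated G) {t : Set W} (ht : IsMaxIndep H t) :
    IsMaxIndep (directProd G H) (Set.univ ×ˢ t) := by
  obtain ⟨hind, hdom⟩ := isMaxIndep_iff.1 ht
  refine isMaxIndep_iff.2 ⟨fun p hp q hq hpq => hind hp.2 hq.2 hpq.2, ?_⟩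
  rintro ⟨v, w⟩ hvw
  obtain ⟨u, hut, huw⟩ := hdom w fun hw => hvw ⟨trivial, hw⟩
  obtain ⟨v', hvv'⟩ := hG v
  exact ⟨(v', u), ⟨trivial, hut⟩, hvv'.symm, huw⟩

end directProd

theorem stmt2 {V W : Type*} [Fintype V] [Fintype W] (G : SimpleGraph V) (H : SimpleGraph W)
    (hG : NoIsolated G) (hH : NoIsolated H) :
    iNum (directProd G H) ≤ min (iNum G * Fintype.card W) (iNum H * Fintype.card V) := by
  obtain ⟨s, hs, hs_card⟩ := exists_isMaxIndep_ncard_eq_iNum G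
  obtain ⟨t, ht, ht_card⟩ := exists_isMaxIndep_ncard_eq_iNum H
  refine le_min ?_ ?_
  · simpa [Set.ncard_prod, hs_card] using iNum_le_ncard (hs.prod_univ hH)
  · simpa [Set.ncard_prod, ht_card, mul_comm] using iNum_le_ncard (ht.univ_prod hG)
end

section
/- If G is a well-covered graph and I is an independent set of G, then the graph G − N[I] (obtained by deleting the closed neighborhood of I) is well-covered. -/
/-! Extending a maximal independent set `S` of `G - N[I]` by `I` gives a maximal independent set
`S ∪ I` of `G`, since every vertex of `N[I] \ I` has a neighbour in `I`. As `S` and `I` are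
disjoint, `|S| = |S ∪ I| - |I|`, and the right-hand side does not depend on `S` when `G` is
well-covered. -/

section ClosedNbhd

variable {V : Type*} {G : SimpleGraph V} {I : Set V}

lemma subset_closedNbhd : I ⊆ closedNbhd G I := Set.subset_union_left

lemma IsIndep.preimage_val {S T : Set V} (hT : IsIndep G T) :
    IsIndep (G.induce S) (Subtype.val ⁻¹' T) :=
  fun _ hu _ hv => hT hu hv

lemma disjoint_image_val_of_compl_closedNbhd (s : Set ↥(closedNbhd G I)ᶜ) :
    Disjoint (Subtype.val '' s) I :=
  Set.disjoint_left.mpr fun _ ⟨a, _, ha⟩ haI => a.2 (ha ▸ subset_closedNbhd haI)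

lemma IsIndep.image_val_union {s : Set ↥(closedNbhd G I)ᶜ}
    (hs : IsIndep (G.induce (closedNbhd G I)ᶜ) s) (hI : IsIndep G I) :
    IsIndep G (Subtype.val '' s ∪ I) := by
  rintro _ (⟨u, hu, rfl⟩ | hu) _ (⟨v, hv, rfl⟩ | hv) hadj
  · exact hs hu hv hadj
  · exact u.2 (Or.inr ⟨_, hv, hadj.symm⟩)
  · exact v.2 (Or.inr ⟨_, hu, hadj⟩)
  · exact hI hu hv hadj

lemma IsMaxIndep.image_val_union {s : Set ↥(closedNbhd G I)ᶜ}
    (hs : IsMaxIndep (G.induce (closedNbhd G I)ᶜ) s) (hI : IsIndep G I) :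
    IsMaxIndep G (Subtype.val '' s ∪ I) := by
  refine ⟨hs.1.image_val_union hI, fun T hT hsub => hsub.antisymm fun x hx => ?_⟩
  by_cases hxN : x ∈ closedNbhd G I
  · rcases hxN with hxI | ⟨u, huI, hadj⟩
    · exact Or.inr hxI
    · exact absurd hadj (hT (hsub (Or.inr huI)) hx)
  · have hs_eq : s = Subtype.val ⁻¹' T :=
      hs.2 _ hT.preimage_val fun a ha => hsub (Or.inl ⟨a, ha, rfl⟩)
    exact Or.inl ⟨⟨x, hxN⟩, hs_eq ▸ hx, rfl⟩

lemma ncard_image_val_union [Finite V] (s : Set ↥(closedNbhd G I)ᶜ) :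
    (Subtype.val '' s ∪ I).ncard = s.ncard + I.ncard := by
  rw [Set.ncard_union_eq (disjoint_image_val_of_compl_closedNbhd s),
    Set.ncard_image_of_injective _ Subtype.val_injective]

end ClosedNbhd

theorem stmt3 {V : Type*} [Fintype V] (G : SimpleGraph V) (I : Set V)
    (hwc : WellCovered G) (hI : IsIndep G I) :
    WellCovered (G.induce (closedNbhd G I)ᶜ) := by
  intro s t hs ht
  have h := hwc _ _ (hs.image_val_union hI) (ht.image_val_union hI)
  rw [ncard_image_val_union, ncard_image_val_union] at h
  omega
end

section
/- If G is a well-covered graph with no isolated vertices, then for every independent set S of G, |S| ≤ |N(S)|, where N(S) is the open neighborhood of S. -/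
/-!
Take a maximal independent set `C` of the subgraph induced on `N(S)`, and let `E ⊆ S` be the
vertices of `S` with no neighbour in `C`. Extending `C ∪ E` to a maximal independent set `M`,
we get `M ∩ N(S) = C` and `M ∩ S = E`. Replacing `M ∩ N(S)` by `S \ M` in `M` yields another
independent set, which well-coveredness bounds by `|M|`; hence `|S \ E| ≤ |C|`. As `C` is
nonempty when `S` is (no isolated vertices), `E` is a proper subset of `S`, and induction gives
`|E| ≤ |N(E)| ≤ |N(S) \ C|`. Adding up, `|S| ≤ |N(S)|`.
-/

section

variable {V : Type*} {G : SimpleGraph V}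

def openNbhd (G : SimpleGraph V) (S : Set V) : Set V := {v | ∃ u ∈ S, G.Adj u v}

lemma isIndep_empty : IsIndep G ∅ := fun _ h => h.elim

lemma IsIndep.mono {s t : Set V} (ht : IsIndep G t) (hst : s ⊆ t) : IsIndep G s :=
  fun _ hu _ hv => ht (hst hu) (hst hv)

lemma isIndep_sUnion_of_isChain {c : Set (Set V)} (hc : IsChain (· ⊆ ·) c)
    (h : ∀ s ∈ c, IsIndep G s) : IsIndep G (⋃₀ c) := by
  rintro u ⟨a, ha, hua⟩ v ⟨b, hb, hvb⟩
  rcases hc.total ha hb with hab | hba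
  · exact h b hb (hab hua) hvb
  · exact h a ha hua (hba hvb)

lemma IsIndep.insert {s : Set V} {w : V} (hs : IsIndep G s) (hw : ∀ c ∈ s, ¬ G.Adj c w) :
    IsIndep G (insert w s) := by
  rintro u (rfl | hu) v (rfl | hv) hadj
  · exact G.loopless.irrefl _ hadj
  · exact hw v hv hadj.symm
  · exact hw u hu hadj
  · exact hs hu hv hadj

lemma IsIndep.exists_dominating_superset {s A : Set V} (hs : IsIndep G s) (hsA : s ⊆ A) :
    ∃ t, s ⊆ t ∧ t ⊆ A ∧ IsIndep G t ∧ ∀ w ∈ A, w ∉ t → ∃ c ∈ t, G.Adj c w := by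
  obtain ⟨t, hst, ⟨htI, htA⟩, htmax⟩ := zorn_subset_nonempty {t | IsIndep G t ∧ t ⊆ A}
    (fun c hcS hchain _ => ⟨⋃₀ c,
      ⟨isIndep_sUnion_of_isChain hchain fun x hx => (hcS hx).1,
        Set.sUnion_subset fun x hx => (hcS hx).2⟩,
      fun _ hx => Set.subset_sUnion_of_mem hx⟩) s ⟨hs, hsA⟩
  refine ⟨t, hst, htA, htI, fun w hwA hwt => ?_⟩
  by_contra! hw
  exact hwt (htmax ⟨htI.insert hw, Set.insert_subset hwA htA⟩ (Set.subset_insert w t)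
    (Set.mem_insert w t))

lemma isMaxIndep_of_dominating {M : Set V} (hM : IsIndep G M)
    (hdom : ∀ w, w ∉ M → ∃ c ∈ M, G.Adj c w) : IsMaxIndep G M := by
  refine ⟨hM, fun t ht hMt => hMt.antisymm fun w hwt => ?_⟩
  by_contra hwM
  obtain ⟨c, hc, hadj⟩ := hdom w hwM
  exact ht (hMt hc) hwt hadj

lemma IsIndep.exists_isMaxIndep_superset {s : Set V} (hs : IsIndep G s) :
    ∃ M, s ⊆ M ∧ IsMaxIndep G M := by
  obtain ⟨M, hsM, -, hM, hdom⟩ := hs.exists_dominating_superset (Set.subset_univ s)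
  exact ⟨M, hsM, isMaxIndep_of_dominating hM fun w => hdom w (Set.mem_univ w)⟩

variable [Finite V]

lemma WellCovered.ncard_sdiff_le_ncard_inter_openNbhd (hwc : WellCovered G) {S M : Set V}
    (hS : IsIndep G S) (hM : IsMaxIndep G M) :
    (S \ M).ncard ≤ (M ∩ openNbhd G S).ncard := by
  set T := (M \ openNbhd G S) ∪ (S \ M)
  have hT : IsIndep G T := by
    rintro u (hu | hu) v (hv | hv) hadj
    · exact hM.1 hu.1 hv.1 hadj
    · exact hu.2 ⟨v, hv.1, hadj.symm⟩
    · exact hv.2 ⟨u, hu.1, hadj⟩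
    · exact hS hu.1 hv.1 hadj
  obtain ⟨M', hTM', hM'⟩ := hT.exists_isMaxIndep_superset
  have hT_le : T.ncard ≤ M.ncard := hwc M M' hM hM' ▸ Set.ncard_le_ncard hTM'
  have hT_card : T.ncard = (M \ openNbhd G S).ncard + (S \ M).ncard :=
    Set.ncard_union_eq (Set.disjoint_of_subset_left Set.sdiff_subset Set.disjoint_sdiff_right)
  have hM_card := Set.ncard_inter_add_ncard_sdiff_eq_ncard M (openNbhd G S)
  omega

lemma WellCovered.exists_ssubset (hwc : WellCovered G) (h0 : NoIsolated G) {S : Set V}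
    (hS : IsIndep G S) (hne : S.Nonempty) :
    ∃ E ⊂ S, ∃ C ⊆ openNbhd G S,
      (S \ E).ncard ≤ C.ncard ∧ openNbhd G E ⊆ openNbhd G S \ C := by
  obtain ⟨C, -, hCN, hC, hCdom⟩ :=
    isIndep_empty.exists_dominating_superset (Set.empty_subset (openNbhd G S))
  set E := {s ∈ S | ∀ c ∈ C, ¬ G.Adj c s}
  have hCE : IsIndep G (C ∪ E) := by
    rintro u (hu | hu) v (hv | hv) hadj
    · exact hC hu hv hadj
    · exact hv.2 u hu hadj
    · exact hu.2 v hv hadj.symm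
    · exact hS hu.1 hv.1 hadj
  obtain ⟨M, hCEM, hM⟩ := hCE.exists_isMaxIndep_superset
  have hMN : M ∩ openNbhd G S ⊆ C := by
    rintro w ⟨hwM, hwN⟩
    by_contra hwC
    obtain ⟨c, hc, hadj⟩ := hCdom w hwN hwC
    exact hM.1 (hCEM (Or.inl hc)) hwM hadj
  have hSE : S \ E ⊆ S \ M := fun s ⟨hsS, hsE⟩ =>
    ⟨hsS, fun hsM => hsE ⟨hsS, fun c hc hadj => hM.1 (hCEM (Or.inl hc)) hsM hadj⟩⟩
  have hEssS : E ⊂ S := by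
    obtain ⟨s, hs⟩ := hne
    obtain ⟨u, hu⟩ := h0 s
    obtain ⟨c, hc⟩ : C.Nonempty := by
      by_contra! hCe
      obtain ⟨c, hc, -⟩ := hCdom u ⟨s, hs, hu⟩ (by simp [hCe])
      simp [hCe] at hc
    obtain ⟨s', hs', hadj⟩ := hCN hc
    exact ⟨fun x hx => hx.1, fun hSE => (hSE hs').2 c hc hadj.symm⟩
  refine ⟨E, hEssS, C, hCN, ?_, ?_⟩
  · calc (S \ E).ncard ≤ (S \ M).ncard := Set.ncard_le_ncard hSE
      _ ≤ (M ∩ openNbhd G S).ncard := hwc.ncard_sdiff_le_ncard_inter_openNbhd hS hM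
      _ ≤ C.ncard := Set.ncard_le_ncard hMN
  · rintro v ⟨e, he, hadj⟩
    exact ⟨⟨e, he.1, hadj⟩, fun hvC => he.2 v hvC hadj.symm⟩

theorem WellCovered.ncard_le_ncard_openNbhd (hwc : WellCovered G) (h0 : NoIsolated G)
    {S : Set V} (hS : IsIndep G S) : S.ncard ≤ (openNbhd G S).ncard := by
  rcases S.eq_empty_or_nonempty with rfl | hne
  · simp
  obtain ⟨E, hES, C, hCN, hSE, hNE⟩ := hwc.exists_ssubset h0 hS hne
  have hE := hwc.ncard_le_ncard_openNbhd h0 (hS.mono hES.subset)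
  calc S.ncard = E.ncard + (S \ E).ncard := by
        rw [← Set.ncard_inter_add_ncard_sdiff_eq_ncard S E, Set.inter_eq_right.mpr hES.subset]
    _ ≤ (openNbhd G S \ C).ncard + C.ncard := add_le_add (hE.trans (Set.ncard_le_ncard hNE)) hSE
    _ = (openNbhd G S).ncard := Set.ncard_sdiff_add_ncard_of_subset hCN
termination_by S.ncard
decreasing_by exact Set.ncard_lt_ncard hES

end

theorem stmt7 {V : Type*} [Fintype V] (G : SimpleGraph V)
    (h0 : NoIsolated G) (hwc : WellCovered G)
    (S : Set V) (hS : IsIndep G S) :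
    S.ncard ≤ {v | ∃ u ∈ S, G.Adj u v}.ncard :=
  hwc.ncard_le_ncard_openNbhd h0 hS
end

section
/- Let n ≥ 2 and let G be any graph. If I is a maximal independent set of G × K_n, then for every vertex g of G, the intersection of I with the K_n-layer over g (the set {g} × V(K_n)) has cardinality 0, 1, or n. -/
theorem IsMaxIndep.mem_of_forall_not_adj {V : Type*} {G : SimpleGraph V} {s : Set V}
    (hs : IsMaxIndep G s) {v : V} (hv : ∀ u ∈ s, ¬ G.Adj v u) : v ∈ s := by
  have hind : IsIndep G (insert v s) := by
    rintro x (rfl | hx) y (rfl | hy) hxy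
    · exact G.loopless.irrefl _ hxy
    · exact hv y hy hxy
    · exact hv x hx hxy.symm
    · exact hs.1 hx hy hxy
  exact hs.2 _ hind (Set.subset_insert v s) ▸ Set.mem_insert v s

theorem IsIndep.not_adj_of_two_mem_layer {V W : Type*} {G : SimpleGraph V} {I : Set (V × W)}
    (hI : IsIndep (directProd G ⊤) I) {g : V} {a b : W} (ha : (g, a) ∈ I) (hb : (g, b) ∈ I)
    (hab : a ≠ b) (k : W) : ∀ u ∈ I, ¬ (directProd G ⊤).Adj (g, k) u := by
  rintro ⟨h, c⟩ hu ⟨hgh, -⟩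
  by_cases hca : c = a
  · exact hI hb hu ⟨hgh, fun hbc => hab (hca ▸ hbc).symm⟩
  · exact hI ha hu ⟨hgh, fun hac => hca hac.symm⟩

theorem IsMaxIndep.subsingleton_or_layer_subset {V W : Type*} {G : SimpleGraph V}
    {I : Set (V × W)} (hI : IsMaxIndep (directProd G ⊤) I) (g : V) :
    (I ∩ {p | p.1 = g}).Subsingleton ∨ {p | p.1 = g} ⊆ I := by
  refine or_iff_not_imp_left.mpr fun hnot => ?_
  obtain ⟨⟨_, a⟩, ⟨ha, rfl⟩, ⟨_, b⟩, ⟨hb, rfl⟩, hne⟩ := Set.not_subsingleton_iff.mp hnot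
  rintro ⟨_, k⟩ rfl
  exact hI.mem_of_forall_not_adj
    (hI.1.not_adj_of_two_mem_layer ha hb (fun hab => hne (congrArg _ hab)) k)

theorem ncard_setOf_fst_eq {V W : Type*} (g : V) :
    {p : V × W | p.1 = g}.ncard = Nat.card W := by
  have hrange : {p : V × W | p.1 = g} = Set.range (Prod.mk g) := by
    ext ⟨h, c⟩
    simp [eq_comm]
  rw [hrange, Set.ncard_range_of_injective (Prod.mk_right_injective g)]

theorem stmt10_general {V : Type*} (n : ℕ) (G : SimpleGraph V)
    (I : Set (V × Fin n))
    (hI : IsMaxIndep (directProd G (⊤ : SimpleGraph (Fin n))) I) (g : V) :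
    (I ∩ {p | p.1 = g}).ncard = 0 ∨ (I ∩ {p | p.1 = g}).ncard = 1 ∨
      (I ∩ {p | p.1 = g}).ncard = n := by
  rcases hI.subsingleton_or_layer_subset g with hsub | hlayer
  · rcases hsub.eq_empty_or_singleton with hempty | ⟨x, hx⟩
    · exact Or.inl (hempty ▸ Set.ncard_empty _)
    · exact Or.inr (Or.inl (hx ▸ Set.ncard_singleton x))
  · rw [Set.inter_eq_right.mpr hlayer, ncard_setOf_fst_eq, Nat.card_fin]
    exact Or.inr (Or.inr rfl)

theorem stmt10 {V : Type*} [Fintype V] (n : ℕ) (hn : 2 ≤ n) (G : SimpleGraph V)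
    (I : Set (V × Fin n))
    (hI : IsMaxIndep (directProd G (⊤ : SimpleGraph (Fin n))) I) (g : V) :
    (I ∩ {p | p.1 = g}).ncard = 0 ∨ (I ∩ {p | p.1 = g}).ncard = 1 ∨
      (I ∩ {p | p.1 = g}).ncard = n :=
  stmt10_general n G I hI g
end

section
/- Let n ≥ 2 be an integer and G a graph. If G × K_n is well-covered, then for every vertex x of G with degree at least n, the graph G − N[x] has at least one isolated vertex. -/
/-!
Suppose, for a contradiction, that `G - N[x]` has no isolated vertex, and fix a colour `z`.
Then `G` has no isolated vertex either, so the layer `V × {z}` is a maximal independent set of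
`G × K_n`, of size `|V|`. On the other hand the full fibre `{x} × [n]` together with the layer of
the vertices outside `N[x]` is also maximal independent: a vertex `(v, i)` with `v ∈ N(x)` is
dominated through a colour `j ≠ i` of the fibre, one with `v ∉ N[x]` and `i ≠ z` through a
neighbour of `v` outside `N[x]`. Its size is `n + |V| - |N[x]| ≤ |V| - 1`, as `|N[x]| ≥ n + 1`.
-/

section

variable {V α : Type*} (G : SimpleGraph V)

@[simp]
lemma directProd_top_adj {a b : V × α} :
    (directProd G (⊤ : SimpleGraph α)).Adj a b ↔ G.Adj a.1 b.1 ∧ a.2 ≠ b.2 := by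
  simp [directProd]

@[simp]
lemma mem_closedNbhd_singleton {x v : V} : v ∈ closedNbhd G {x} ↔ v = x ∨ G.Adj x v := by
  simp [closedNbhd]

lemma isMaxIndep_of_dominating_s11 {s : Set V} (hs : IsIndep G s)
    (hdom : ∀ v ∉ s, ∃ u ∈ s, G.Adj u v) : IsMaxIndep G s := by
  refine ⟨hs, fun t ht hst => hst.antisymm fun v hvt => ?_⟩
  by_contra hvs
  obtain ⟨u, hus, huv⟩ := hdom v hvs
  exact ht (hst hus) hvt huv

lemma noIsolated_of_noIsolated_sdiff_closedNbhd {x y : V} (hxy : G.Adj x y)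
    (h : ∀ v ∉ closedNbhd G {x}, ∃ u ∉ closedNbhd G {x}, G.Adj v u) : NoIsolated G := by
  intro v
  by_cases hv : v ∈ closedNbhd G {x}
  · rcases (mem_closedNbhd_singleton G).1 hv with rfl | hxv
    exacts [⟨y, hxy⟩, ⟨x, hxv.symm⟩]
  · obtain ⟨u, -, hvu⟩ := h v hv
    exact ⟨u, hvu⟩

lemma isMaxIndep_directProd_top_layer (hG : NoIsolated G) (z : α) :
    IsMaxIndep (directProd G ⊤) (Set.univ ×ˢ {z}) := by
  refine isMaxIndep_of_dominating_s11 _ ?_ fun ⟨v, i⟩ hv => ?_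
  · rintro ⟨a, i⟩ ⟨-, rfl : i = z⟩ ⟨b, j⟩ ⟨-, rfl : j = i⟩ hab
    exact ((directProd_top_adj G).1 hab).2 rfl
  · have hiz : i ≠ z := fun h => hv ⟨trivial, h⟩
    obtain ⟨u, hvu⟩ := hG v
    exact ⟨(u, z), ⟨trivial, rfl⟩, (directProd_top_adj G).2 ⟨hvu.symm, hiz.symm⟩⟩

lemma isMaxIndep_directProd_top_fibre_union_layer [Nontrivial α] {x : V} (z : α)
    (h : ∀ v ∉ closedNbhd G {x}, ∃ u ∉ closedNbhd G {x}, G.Adj v u) :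
    IsMaxIndep (directProd G ⊤)
      ({x} ×ˢ Set.univ ∪ (closedNbhd G {x})ᶜ ×ˢ {z}) := by
  have hfar : ∀ w ∉ closedNbhd G {x}, ¬ G.Adj x w := fun w hw hxw =>
    hw ((mem_closedNbhd_singleton G).2 (Or.inr hxw))
  refine isMaxIndep_of_dominating_s11 _ ?_ fun ⟨v, i⟩ hv => ?_
  · rintro ⟨a, i⟩ ha ⟨b, j⟩ hb hab
    rw [directProd_top_adj] at hab
    rcases ha with ⟨ha, -⟩ | ⟨ha, hi⟩ <;> rcases hb with ⟨hb, -⟩ | ⟨hb, hj⟩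
    · obtain rfl : a = x := ha
      obtain rfl : b = a := hb
      exact G.loopless.irrefl _ hab.1
    · obtain rfl : a = x := ha
      exact hfar b hb hab.1
    · obtain rfl : b = x := hb
      exact hfar a ha hab.1.symm
    · obtain rfl : i = z := hi
      exact hab.2 hj.symm
  · have hvx : v ≠ x := fun h => hv (Or.inl ⟨h, trivial⟩)
    by_cases hvC : v ∈ closedNbhd G {x}
    · have hxv := ((mem_closedNbhd_singleton G).1 hvC).resolve_left hvx
      obtain ⟨j, hji⟩ := exists_ne i
      exact ⟨(x, j), Or.inl ⟨rfl, trivial⟩, (directProd_top_adj G).2 ⟨hxv, hji⟩⟩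
    · have hiz : i ≠ z := fun h => hv (Or.inr ⟨hvC, h⟩)
      obtain ⟨u, huC, hvu⟩ := h v hvC
      exact ⟨(u, z), Or.inr ⟨huC, rfl⟩, (directProd_top_adj G).2 ⟨hvu.symm, hiz.symm⟩⟩

lemma ncard_closedNbhd_singleton [Finite V] (x : V) :
    (closedNbhd G {x}).ncard = (G.neighborSet x).ncard + 1 := by
  have : closedNbhd G {x} = insert x (G.neighborSet x) := by
    ext v
    simp [eq_comm]
  rw [this, Set.ncard_insert_of_notMem G.notMem_neighborSet_self]

lemma ncard_fibre_union_layer [Finite V] [Finite α] {x : V} {s : Set V}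
    (hx : x ∉ s) (z : α) :
    ({x} ×ˢ Set.univ ∪ s ×ˢ {z} : Set (V × α)).ncard = Nat.card α + s.ncard := by
  have hdisj : Disjoint ({x} ×ˢ Set.univ : Set (V × α)) (s ×ˢ {z}) :=
    Set.disjoint_left.2 fun _ ha hb => hx (ha.1 ▸ hb.1)
  rw [Set.ncard_union_eq hdisj, Set.ncard_prod, Set.ncard_prod]
  simp

end

theorem stmt11 {V : Type*} [Fintype V] (n : ℕ) (hn : 2 ≤ n) (G : SimpleGraph V)
    (hwc : WellCovered (directProd G (⊤ : SimpleGraph (Fin n))))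
    (x : V) (hdeg : n ≤ (G.neighborSet x).ncard) :
    ∃ v ∉ closedNbhd G {x}, ∀ u ∉ closedNbhd G {x}, ¬ G.Adj v u := by
  by_contra! h
  have : Nontrivial (Fin n) := Fin.nontrivial_iff_two_le.2 hn
  let z : Fin n := ⟨0, by omega⟩
  obtain ⟨y, hxy⟩ : (G.neighborSet x).Nonempty :=
    Set.nonempty_of_ncard_ne_zero (by omega)
  have hcard := hwc _ _ (isMaxIndep_directProd_top_fibre_union_layer G z h)
    (isMaxIndep_directProd_top_layer G (noIsolated_of_noIsolated_sdiff_closedNbhd G hxy h) z)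
  have hxC : x ∈ closedNbhd G {x} := Or.inl rfl
  rw [ncard_fibre_union_layer (Set.notMem_compl_iff.2 hxC), Set.ncard_prod, Set.ncard_singleton,
    Set.ncard_univ, Nat.card_fin] at hcard
  have hsplit := Set.ncard_add_ncard_compl (closedNbhd G {x})
  have hclosed := ncard_closedNbhd_singleton G x
  omega
end

section
/- Let G and H be nontrivial connected graphs such that G × H is well-covered. If G has no isolatable vertices, then G is a complete graph. -/
/-!
Fix a maximal independent set `B` of `H`. For every independent set `A` of `G`, the set
`A × V(H) ∪ (V(G) ∖ N[A]) × B` is maximal independent in `G × H`: a vertex `(g, h)` with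
`g ∈ N(A)` is dominated through `A × V(H)` because `H` has no isolated vertices, and one with
`g ∉ N[A]` is dominated through `(V(G) ∖ N[A]) × B` because `g` is not isolatable. Comparing its
size with the case `A = ∅` gives `|A| · |V(H)| = |N[A]| · |B|` for every independent `A`.
If `x, z` are non-adjacent vertices with a common neighbour, applying this to `{x}`, `{z}` and
`{x, z}` yields `|N[x] ∩ N[z]| · |B| = 0`, which is absurd. So adjacency is transitive on
distinct vertices, and a connected graph with this property is complete.
-/

section

variable {V W : Type*} {G : SimpleGraph V} {H : SimpleGraph W}

lemma isIndep_singleton (v : V) : IsIndep G {v} := by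
  rintro u rfl v rfl huv
  exact G.irrefl huv

lemma isIndep_pair {x z : V} (h : ¬ G.Adj x z) : IsIndep G {x, z} := by
  rintro u (rfl | rfl) v (rfl | rfl) huv
  · exact G.irrefl huv
  · exact h huv
  · exact h huv.symm
  · exact G.irrefl huv

lemma exists_isMaxIndep_s16 [Finite W] (H : SimpleGraph W) : ∃ B, IsMaxIndep H B := by
  obtain ⟨B, hB⟩ :=
    (Set.toFinite {s : Set W | IsIndep H s}).exists_maximal ⟨∅, fun _ h => h.elim⟩
  exact ⟨B, hB.prop, fun t ht hBt => hB.eq_of_le ht hBt⟩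

lemma IsMaxIndep.exists_adj_of_notMem_s16 {B : Set W} (hB : IsMaxIndep H B) {h : W} (hh : h ∉ B) :
    ∃ b ∈ B, H.Adj h b := by
  by_contra! hcon
  have hind : IsIndep H (insert h B) := by
    rintro u (rfl | hu) v (rfl | hv) huv
    · exact H.irrefl huv
    · exact hcon v hv huv
    · exact hcon u hu huv.symm
    · exact hB.1 hu hv huv
  exact hh (hB.2 _ hind (Set.subset_insert _ _) ▸ Set.mem_insert h B)

lemma isMaxIndep_of_forall_exists_adj {S : Set V} (hS : IsIndep G S)
    (hdom : ∀ p ∉ S, ∃ q ∈ S, G.Adj p q) : IsMaxIndep G S := by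
  refine ⟨hS, fun t ht hSt => (hSt.antisymm fun p hp => ?_)⟩
  by_contra hpS
  obtain ⟨q, hq, hpq⟩ := hdom p hpS
  exact ht hp (hSt hq) hpq

lemma closedNbhd_empty (G : SimpleGraph V) : closedNbhd G ∅ = ∅ := by
  simp [closedNbhd]

lemma closedNbhd_union (G : SimpleGraph V) (s t : Set V) :
    closedNbhd G (s ∪ t) = closedNbhd G s ∪ closedNbhd G t := by
  ext v
  simp only [closedNbhd, Set.mem_union, Set.mem_ofPred_eq]
  constructor
  · rintro ((hs | ht) | ⟨u, hs | ht, huv⟩)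
    exacts [.inl (.inl hs), .inr (.inl ht), .inl (.inr ⟨u, hs, huv⟩), .inr (.inr ⟨u, ht, huv⟩)]
  · rintro ((hs | ⟨u, hs, huv⟩) | (ht | ⟨u, ht, huv⟩))
    exacts [.inl (.inl hs), .inr ⟨u, .inl hs, huv⟩, .inl (.inr ht), .inr ⟨u, .inr ht, huv⟩]

def prodIndepSet (G : SimpleGraph V) (A : Set V) (B : Set W) : Set (V × W) :=
  A ×ˢ Set.univ ∪ (closedNbhd G A)ᶜ ×ˢ B

lemma isMaxIndep_prodIndepSet (hH : NoIsolated H) (hGiso : ∀ v, ¬ Isolatable G v)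
    {A : Set V} (hA : IsIndep G A) {B : Set W} (hB : IsMaxIndep H B) :
    IsMaxIndep (directProd G H) (prodIndepSet G A B) := by
  refine isMaxIndep_of_forall_exists_adj ?_ ?_
  · rintro ⟨g, h⟩ hgh ⟨g', h'⟩ hgh' ⟨hgg', hhh'⟩
    rcases hgh with ⟨hg, -⟩ | ⟨hg, hh⟩ <;> rcases hgh' with ⟨hg', -⟩ | ⟨hg', hh'⟩
    · exact hA hg hg' hgg'
    · exact hg' (.inr ⟨g, hg, hgg'⟩)
    · exact hg (.inr ⟨g', hg', hgg'.symm⟩)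
    · exact hB.1 hh hh' hhh'
  · rintro ⟨g, h⟩ hgh
    by_cases hg : g ∈ closedNbhd G A
    · rcases hg with hg | ⟨a, ha, hag⟩
      · exact absurd (.inl ⟨hg, trivial⟩) hgh
      · obtain ⟨h', hh'⟩ := hH h
        exact ⟨(a, h'), .inl ⟨ha, trivial⟩, hag.symm, hh'⟩
    · obtain ⟨b, hb, hhb⟩ := hB.exists_adj_of_notMem_s16 fun hh => hgh (.inr ⟨hg, hh⟩)
      obtain ⟨u, hu, hgu⟩ : ∃ u ∉ closedNbhd G A, G.Adj g u := by
        by_contra! hno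
        exact hGiso g ⟨A, hA, hg, hno⟩
      exact ⟨(u, b), .inr ⟨hu, hb⟩, hgu, hhb⟩

lemma ncard_prodIndepSet [Finite V] [Finite W] (G : SimpleGraph V) (A : Set V) (B : Set W) :
    (prodIndepSet G A B).ncard = A.ncard * Nat.card W + (closedNbhd G A)ᶜ.ncard * B.ncard := by
  rw [prodIndepSet, Set.ncard_union_eq, Set.ncard_prod, Set.ncard_prod, Set.ncard_univ]
  exact Set.disjoint_left.mpr fun p hp hp' => hp'.1 (.inl hp.1)

lemma ncard_mul_card_eq_of_wellCovered [Finite V] [Finite W] (hwc : WellCovered (directProd G H))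
    (hH : NoIsolated H) (hGiso : ∀ v, ¬ Isolatable G v) {B : Set W} (hB : IsMaxIndep H B)
    {A : Set V} (hA : IsIndep G A) :
    A.ncard * Nat.card W = (closedNbhd G A).ncard * B.ncard := by
  have h := hwc _ _ (isMaxIndep_prodIndepSet hH hGiso hA hB)
    (isMaxIndep_prodIndepSet hH hGiso (A := ∅) (fun _ h => h.elim) hB)
  rw [ncard_prodIndepSet, ncard_prodIndepSet, closedNbhd_empty, Set.compl_empty, Set.ncard_empty,
    zero_mul, zero_add, Set.ncard_univ, ← Set.ncard_add_ncard_compl (closedNbhd G A),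
    add_mul] at h
  omega

lemma adj_of_adj_of_adj_of_ncard_mul_eq [Finite V] {w b : ℕ} (hw : 0 < w)
    (hcount : ∀ A, IsIndep G A → A.ncard * w = (closedNbhd G A).ncard * b)
    {x y z : V} (hxy : G.Adj x y) (hyz : G.Adj y z) (hxz : x ≠ z) : G.Adj x z := by
  by_contra hnxz
  have hx := hcount _ (isIndep_singleton x)
  have hz := hcount _ (isIndep_singleton z)
  have hpair := hcount _ (isIndep_pair hnxz)
  rw [Set.ncard_singleton, one_mul] at hx hz
  rw [Set.ncard_pair hxz, Set.insert_eq, closedNbhd_union] at hpair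
  have hie := Set.ncard_union_add_ncard_inter (closedNbhd G {x}) (closedNbhd G {z})
  have hinter : 0 < (closedNbhd G {x} ∩ closedNbhd G {z}).ncard :=
    (Set.ncard_pos).mpr ⟨y, .inr ⟨x, rfl, hxy⟩, .inr ⟨z, rfl, hyz.symm⟩⟩
  have hb : 0 < b := Nat.pos_of_mul_pos_left (hx ▸ hw : 0 < _)
  have hzero : (closedNbhd G {x} ∩ closedNbhd G {z}).ncard * b = 0 := by
    have := congrArg (· * b) hie
    simp only [add_mul] at this
    linarith
  exact (Nat.mul_pos hinter hb).ne' hzero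

lemma eq_top_of_preconnected_of_adj_trans (hG : G.Preconnected)
    (htrans : ∀ x y z, G.Adj x y → G.Adj y z → x ≠ z → G.Adj x z) : G = ⊤ := by
  ext x z
  refine ⟨G.ne_of_adj, fun hxz => ?_⟩
  suffices ∀ v, Relation.ReflTransGen G.Adj x v → x = v ∨ G.Adj x v from
    (this z ((SimpleGraph.reachable_iff_reflTransGen x z).mp (hG x z))).resolve_left hxz
  intro v h
  induction h with
  | refl => exact .inl rfl
  | @tail u v _ huv ih =>
    rcases ih with rfl | hxu
    · exact .inr huv
    · by_cases hxv : x = v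
      · exact .inl hxv
      · exact .inr (htrans x u v hxu huv hxv)

end

theorem stmt16_general {V W : Type*} [Fintype V] [Fintype W] (G : SimpleGraph V) (H : SimpleGraph W)
    (hGconn : G.Connected)
    (hHconn : H.Connected) (hHnt : 1 < Fintype.card W)
    (hwc : WellCovered (directProd G H))
    (hGiso : ∀ v, ¬ Isolatable G v) :
    G = ⊤ := by
  have : Nontrivial W := Fintype.one_lt_card_iff_nontrivial.mp hHnt
  have hH : NoIsolated H := hHconn.preconnected.exists_adj_of_nontrivial
  obtain ⟨B, hB⟩ := exists_isMaxIndep_s16 H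
  exact eq_top_of_preconnected_of_adj_trans hGconn.preconnected fun _ _ _ =>
    adj_of_adj_of_adj_of_ncard_mul_eq Nat.card_pos
      fun _ hA => ncard_mul_card_eq_of_wellCovered hwc hH hGiso hB hA

theorem stmt16 {V W : Type*} [Fintype V] [Fintype W] (G : SimpleGraph V) (H : SimpleGraph W)
    (hGconn : G.Connected) (hGnt : 1 < Fintype.card V)
    (hHconn : H.Connected) (hHnt : 1 < Fintype.card W)
    (hwc : WellCovered (directProd G H))
    (hGiso : ∀ v, ¬ Isolatable G v) :
    G = ⊤ :=
  stmt16_general G H hGconn hHconn hHnt hwc hGiso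
end
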